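/- Let e ∈ Λ be a nonzero primitive isotropic vector: e ⋆ e = 0, and whenever e = α·w with α ∈ ℤ[ζ_k] and w ∈ Λ, α is a unit of ℤ[ζ_k]. Then there exists f ∈ Λ with f ⋆ f = 0 and f ⋆ e = 1 + ζ_k. -/

import Mathlib

/-!
The ring `R = ℤ[ζ_k]` is norm-Euclidean, hence a principal ideal domain. The pairings `x ⋆ e`
with `x` in the dual lattice `Λ^∨ = (1 + ζ)⁻¹ Λ` form an ideal `(δ)` of `R`; then `e / δ` pairs
integrally with `Λ^∨`, so it lies in `(Λ^∨)^∨ = Λ`, and primitivity of `e` makes `δ` a unit.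
Hence `y ⋆ e = 1` for some `y ∈ Λ^∨`, and `f₀ = conj (1 + ζ) • y` lies in `Λ` with
`f₀ ⋆ e = 1 + ζ`. Finally `f₀ ⋆ f₀` is real and divisible by `1 + ζ`, so it equals
`m · tr (1 + ζ)` with `m ∈ ℤ`; then `f = f₀ - m e` is isotropic.
-/

noncomputable section

open Matrix Complex
open scoped MatrixGroups Pointwise

/-- `ζ_k = exp(2πi/k)`, a primitive `k`-th root of unity. -/
def zetaC (k : ℕ) : ℂ := Complex.exp (2 * Real.pi * Complex.I / k)

/-- `ℤ[ζ_k]`, the subring of `ℂ` generated by `ζ_k`. -/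
def Rk (k : ℕ) : Subring ℂ := Subring.closure {zetaC k}

/-- The Hermitian form `x ⋆ y = ∑ conj(x i) * A i j * y j` attached to a Gram matrix `A`. -/
def hermF {n : ℕ} (A : Matrix (Fin n) (Fin n) ℂ) (x y : Fin n → ℂ) : ℂ :=
  ∑ i, ∑ j, (starRingEnd ℂ) (x i) * A i j * y j

/-- Coercion of a vector with entries in `ℤ[ζ_k]` to a complex vector. -/
def cv {k n : ℕ} (v : Fin n → Rk k) : Fin n → ℂ := fun i => (v i : ℂ)

/-- The real inner product `x · y = (2/|1+ζ_k|²) Re (x ⋆ y)`. -/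
def dotF {n : ℕ} (k : ℕ) (A : Matrix (Fin n) (Fin n) ℂ) (x y : Fin n → ℂ) : ℝ :=
  2 / Complex.normSq (1 + zetaC k) * (hermF A x y).re

/-- The tridiagonal Gram matrix `G_k`. -/
def Gmat (k n : ℕ) : Matrix (Fin n) (Fin n) ℂ :=
  Matrix.of fun i j =>
    if i = j then -((1 + zetaC k) * (1 + (starRingEnd ℂ) (zetaC k)))
    else if (i : ℕ) + 1 = (j : ℕ) then 1 + (starRingEnd ℂ) (zetaC k)
    else if (j : ℕ) + 1 = (i : ℕ) then 1 + zetaC k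
    else 0

/-- `U(Λ)`: the group of `ℤ[ζ_k]`-module automorphisms of `Λ = ℤ[ζ_k]^n` preserving the
Hermitian form with Gram matrix `A`. -/
def Ugrp (k n : ℕ) (A : Matrix (Fin n) (Fin n) ℂ) : Subgroup (GL (Fin n) ↥(Rk k)) where
  carrier := {g | ∀ x y : Fin n → Rk k,
    hermF A (cv ((g : Matrix (Fin n) (Fin n) ↥(Rk k)) *ᵥ x))
            (cv ((g : Matrix (Fin n) (Fin n) ↥(Rk k)) *ᵥ y)) = hermF A (cv x) (cv y)}
  one_mem' := by
    intro x y
    rw [Units.val_one, Matrix.one_mulVec, Matrix.one_mulVec]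
  mul_mem' := by
    intro a b ha hb x y
    rw [Units.val_mul, ← Matrix.mulVec_mulVec, ← Matrix.mulVec_mulVec]
    rw [ha ((b : Matrix (Fin n) (Fin n) ↥(Rk k)) *ᵥ x) ((b : Matrix (Fin n) (Fin n) ↥(Rk k)) *ᵥ y)]
    exact hb x y
  inv_mem' := by
    intro g hg x y
    have h := hg (((g⁻¹ : GL (Fin n) ↥(Rk k)) : Matrix (Fin n) (Fin n) ↥(Rk k)) *ᵥ x)
      (((g⁻¹ : GL (Fin n) ↥(Rk k)) : Matrix (Fin n) (Fin n) ↥(Rk k)) *ᵥ y)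
    rw [Matrix.mulVec_mulVec, Matrix.mulVec_mulVec, ← Units.val_mul, mul_inv_cancel,
      Units.val_one, Matrix.one_mulVec, Matrix.one_mulVec] at h
    exact h.symm

/-- The stabilizer of a lattice vector `v` in a subgroup `Γ` of the general linear group. -/
def stab {k n : ℕ} (Γ : Subgroup (GL (Fin n) ↥(Rk k))) (v : Fin n → Rk k) :
    Set (GL (Fin n) ↥(Rk k)) :=
  {g | g ∈ Γ ∧ (g : Matrix (Fin n) (Fin n) ↥(Rk k)) *ᵥ v = v}

/-- Two lattice vectors lie in the same `Γ`-orbit. -/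
def sameOrbit {k n : ℕ} (Γ : Subgroup (GL (Fin n) ↥(Rk k))) (v w : Fin n → Rk k) : Prop :=
  ∃ g ∈ Γ, (g : Matrix (Fin n) (Fin n) ↥(Rk k)) *ᵥ v = w

open ComplexConjugate

/-- `ζ` is a root of `X² - d X + 1`, which is `Φ₃`, `Φ₄`, `Φ₆` for `d = -1, 0, 1`. -/
structure IsQuadCyclotomicRoot (ζ : ℂ) (d : ℤ) : Prop where
  mul_conj_self : ζ * conj ζ = 1
  add_conj_self : ζ + conj ζ = d
  abs_le_one : |d| ≤ 1

namespace IsQuadCyclotomicRoot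

variable {ζ : ℂ} {d : ℤ}

lemma sq_eq (h : IsQuadCyclotomicRoot ζ d) : ζ ^ 2 = d * ζ - 1 := by
  linear_combination ζ * h.add_conj_self - h.mul_conj_self

lemma two_mul_re (h : IsQuadCyclotomicRoot ζ d) : 2 * ζ.re = d := by
  simpa [two_mul] using congrArg re h.add_conj_self

lemma re_sq_add_im_sq (h : IsQuadCyclotomicRoot ζ d) : ζ.re ^ 2 + ζ.im ^ 2 = 1 := by
  simpa [sq] using congrArg re h.mul_conj_self

lemma sq_le_one (h : IsQuadCyclotomicRoot ζ d) : d ^ 2 ≤ 1 := by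
  rw [← sq_abs]; exact pow_le_one₀ (abs_nonneg _) h.abs_le_one

lemma im_ne_zero (h : IsQuadCyclotomicRoot ζ d) : ζ.im ≠ 0 := by
  intro him
  have hd : (d : ℝ) ^ 2 ≤ 1 := by exact_mod_cast h.sq_le_one
  have hre := h.re_sq_add_im_sq
  rw [him] at hre
  rw [← h.two_mul_re] at hd
  nlinarith

lemma one_add_ne_zero (h : IsQuadCyclotomicRoot ζ d) : 1 + ζ ≠ 0 := fun h0 =>
  h.im_ne_zero (by simpa using congrArg im h0)

lemma one_add_div_conj_mem_closure (h : IsQuadCyclotomicRoot ζ d) :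
    (1 + ζ) / conj (1 + ζ) ∈ Subring.closure {ζ} := by
  have : conj (1 + ζ) ≠ 0 := (map_ne_zero _).mpr h.one_add_ne_zero
  rw [show (1 + ζ) / conj (1 + ζ) = ζ by
    rw [div_eq_iff this, map_add, map_one]; linear_combination -h.mul_conj_self]
  exact Subring.subset_closure rfl

lemma mem_closure_iff (h : IsQuadCyclotomicRoot ζ d) {x : ℂ} :
    x ∈ Subring.closure {ζ} ↔ ∃ a b : ℤ, x = a + b * ζ := by
  constructor
  · intro hx
    induction hx using Subring.closure_induction with
    | mem x hx => exact ⟨0, 1, by simp [Set.mem_singleton_iff.mp hx]⟩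
    | zero => exact ⟨0, 0, by simp⟩
    | one => exact ⟨1, 0, by simp⟩
    | add x y _ _ ihx ihy =>
      obtain ⟨a, b, rfl⟩ := ihx
      obtain ⟨a', b', rfl⟩ := ihy
      exact ⟨a + a', b + b', by push_cast; ring⟩
    | neg x _ ihx =>
      obtain ⟨a, b, rfl⟩ := ihx
      exact ⟨-a, -b, by push_cast; ring⟩
    | mul x y _ _ ihx ihy =>
      obtain ⟨a, b, rfl⟩ := ihx
      obtain ⟨a', b', rfl⟩ := ihy
      exact ⟨a * a' - b * b', a * b' + b * a' + b * b' * d, by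
        push_cast; linear_combination (b * b' : ℂ) * h.sq_eq⟩
  · rintro ⟨a, b, rfl⟩
    exact add_mem (intCast_mem _ a) (mul_mem (intCast_mem _ b) (Subring.subset_closure rfl))

lemma conj_mem_closure (h : IsQuadCyclotomicRoot ζ d) {x : ℂ} (hx : x ∈ Subring.closure {ζ}) :
    conj x ∈ Subring.closure {ζ} := by
  obtain ⟨a, b, rfl⟩ := h.mem_closure_iff.mp hx
  refine h.mem_closure_iff.mpr ⟨a + b * d, -b, ?_⟩
  simp only [map_add, map_mul, map_intCast]
  push_cast
  linear_combination (b : ℂ) * h.add_conj_self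

lemma normSq_add_mul (h : IsQuadCyclotomicRoot ζ d) (a b : ℝ) :
    normSq (a + b * ζ) = a ^ 2 + a * b * d + b ^ 2 := by
  apply ofReal_injective
  rw [← mul_conj, map_add, map_mul, conj_ofReal, conj_ofReal]
  push_cast
  linear_combination (a * b : ℂ) * h.add_conj_self + (b ^ 2 : ℂ) * h.mul_conj_self

lemma exists_normSq_eq (h : IsQuadCyclotomicRoot ζ d) {x : ℂ} (hx : x ∈ Subring.closure {ζ}) :
    ∃ m : ℕ, normSq x = m := by
  obtain ⟨a, b, rfl⟩ := h.mem_closure_iff.mp hx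
  have hd := h.sq_le_one
  refine ⟨(a ^ 2 + a * b * d + b ^ 2).toNat, ?_⟩
  have := h.normSq_add_mul a b
  push_cast at this
  rw [this, ← Int.cast_natCast, Int.toNat_of_nonneg (by nlinarith [sq_nonneg (2 * a + b * d)])]
  push_cast; ring

lemma closure_ne_top (h : IsQuadCyclotomicRoot ζ d) : Subring.closure {ζ} ≠ ⊤ := fun htop => by
  obtain ⟨m, hm⟩ := h.exists_normSq_eq (htop ▸ Subring.mem_top (2⁻¹ : ℂ))
  rw [map_inv₀, normSq_ofNat] at hm
  have hm0 : (0 : ℝ) < m := by linarith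
  have hm1 : (m : ℝ) < 1 := by linarith
  norm_cast at hm0 hm1
  omega

lemma exists_normSq_sub_lt_one (h : IsQuadCyclotomicRoot ζ d) (z : ℂ) :
    ∃ q ∈ Subring.closure {ζ}, normSq (z - q) < 1 := by
  set y := z.im / ζ.im
  set x := z.re - y * ζ.re
  have hz : z = x + y * ζ := by
    apply Complex.ext <;> simp [x, y, div_mul_cancel₀ _ h.im_ne_zero]
  refine ⟨round x + round y * ζ, h.mem_closure_iff.mpr ⟨_, _, rfl⟩, ?_⟩
  have hsub : z - (round x + round y * ζ) = ↑(x - round x) + ↑(y - round y) * ζ := by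
    rw [hz]; push_cast; ring
  have hu := abs_sub_round x
  have hv := abs_sub_round y
  have hd : |(d : ℝ)| ≤ 1 := by exact_mod_cast h.abs_le_one
  have huvd : |(x - round x) * (y - round y) * d| ≤ 1 / 4 := by
    rw [abs_mul, abs_mul]
    have := mul_le_mul (mul_le_mul hu hv (abs_nonneg _) (by norm_num)) hd (abs_nonneg _)
      (by norm_num)
    linarith
  rw [hsub, h.normSq_add_mul]
  nlinarith [abs_le.mp huvd, sq_abs (x - round x), sq_abs (y - round y),
    abs_nonneg (x - round x), abs_nonneg (y - round y)]

lemma exists_generator (h : IsQuadCyclotomicRoot ζ d) {J : Set ℂ}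
    (hJ : J ⊆ Subring.closure {ζ}) (hadd : ∀ x ∈ J, ∀ y ∈ J, x + y ∈ J)
    (hmul : ∀ α ∈ Subring.closure {ζ}, ∀ x ∈ J, α * x ∈ J) (hne : ∃ x ∈ J, x ≠ 0) :
    ∃ δ ∈ J, δ ≠ 0 ∧ ∀ x ∈ J, ∃ ρ ∈ Subring.closure {ζ}, x = ρ * δ := by
  classical
  have hP : ∃ m : ℕ, ∃ x ∈ J, x ≠ 0 ∧ normSq x = m := by
    obtain ⟨x, hxJ, hx0⟩ := hne
    obtain ⟨m, hm⟩ := h.exists_normSq_eq (hJ hxJ)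
    exact ⟨m, x, hxJ, hx0, hm⟩
  obtain ⟨δ, hδJ, hδ0, hδ⟩ := Nat.find_spec hP
  refine ⟨δ, hδJ, hδ0, fun x hxJ => ?_⟩
  obtain ⟨q, hq, hlt⟩ := h.exists_normSq_sub_lt_one (x / δ)
  refine ⟨q, hq, ?_⟩
  have hrJ : x + -q * δ ∈ J := hadd x hxJ _ (hmul _ (neg_mem hq) δ hδJ)
  have hr : x + -q * δ = δ * (x / δ - q) := by field_simp; ring
  by_contra hne
  obtain ⟨m, hm⟩ := h.exists_normSq_eq (hJ hrJ)
  refine Nat.find_min hP (m := m) ?_ ⟨_, hrJ, fun h0 => hne (by linear_combination h0), hm⟩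
  have hdec : normSq (x + -q * δ) < normSq δ := by
    rw [hr, normSq_mul]
    exact mul_lt_of_lt_one_right (normSq_pos.mpr hδ0) hlt
  rw [hm, hδ] at hdec
  exact_mod_cast hdec

lemma exists_int_of_im_one_add_mul_eq_zero (h : IsQuadCyclotomicRoot ζ d) {r : ℂ}
    (hr : r ∈ Subring.closure {ζ}) (him : ((1 + ζ) * r).im = 0) :
    ∃ m : ℤ, (1 + ζ) * r = m * (2 + d) := by
  obtain ⟨p, q, rfl⟩ := h.mem_closure_iff.mp hr
  have hexp : (1 + ζ) * (p + q * ζ) = ↑(p - q) + ↑(p + q + q * d) * ζ := by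
    push_cast; linear_combination (q : ℂ) * h.sq_eq
  have hpq : p + q + q * d = 0 := by
    rw [hexp] at him
    exact_mod_cast (by simpa [h.im_ne_zero] using him : (p : ℝ) + q + q * d = 0)
  refine ⟨-q, ?_⟩
  rw [hexp, hpq, show p = -q - q * d by linarith]
  push_cast; ring

end IsQuadCyclotomicRoot

lemma zetaC_eq_exp (k : ℕ) : zetaC k = exp ((2 * Real.pi / k : ℝ) * I) := by
  unfold zetaC; push_cast; ring_nf

lemma exists_isQuadCyclotomicRoot_zetaC {k : ℕ} (hk : k ∈ ({3, 4, 6} : Set ℕ)) :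
    ∃ d : ℤ, IsQuadCyclotomicRoot (zetaC k) d := by
  have hmul : zetaC k * conj (zetaC k) = 1 := by
    rw [mul_conj, normSq_eq_norm_sq, zetaC_eq_exp, norm_exp_ofReal_mul_I]; simp
  have hadd : zetaC k + conj (zetaC k) = (2 * Real.cos (2 * Real.pi / k) : ℝ) := by
    rw [add_conj, zetaC_eq_exp, exp_ofReal_mul_I_re]
  rcases hk with rfl | rfl | rfl
  · refine ⟨-1, hmul, ?_, by norm_num⟩
    rw [hadd, show 2 * Real.pi / (3 : ℕ) = Real.pi - Real.pi / 3 by push_cast; ring,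
      Real.cos_pi_sub, Real.cos_pi_div_three]
    push_cast; ring
  · refine ⟨0, hmul, ?_, by norm_num⟩
    rw [hadd, show 2 * Real.pi / (4 : ℕ) = Real.pi / 2 by push_cast; ring, Real.cos_pi_div_two]
    push_cast; ring
  · refine ⟨1, hmul, ?_, by norm_num⟩
    rw [hadd, show 2 * Real.pi / (6 : ℕ) = Real.pi / 3 by push_cast; ring, Real.cos_pi_div_three]
    push_cast; ring

section HermitianForm

variable {n : ℕ} {A : Matrix (Fin n) (Fin n) ℂ}

lemma hermF_add_left (x y z : Fin n → ℂ) : hermF A (x + y) z = hermF A x z + hermF A y z := by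
  simp only [hermF, Pi.add_apply, map_add, add_mul, Finset.sum_add_distrib]

lemma hermF_sub_left (x y z : Fin n → ℂ) : hermF A (x - y) z = hermF A x z - hermF A y z := by
  simp only [hermF, Pi.sub_apply, map_sub, sub_mul, Finset.sum_sub_distrib]

lemma hermF_sub_right (x y z : Fin n → ℂ) : hermF A x (y - z) = hermF A x y - hermF A x z := by
  simp only [hermF, Pi.sub_apply, mul_sub, Finset.sum_sub_distrib]

lemma hermF_smul_left (c : ℂ) (x y : Fin n → ℂ) : hermF A (c • x) y = conj c * hermF A x y := by
  simp only [hermF, Pi.smul_apply, smul_eq_mul, map_mul, Finset.mul_sum]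
  exact Finset.sum_congr rfl fun _ _ => Finset.sum_congr rfl fun _ _ => by ring

lemma hermF_smul_right (c : ℂ) (x y : Fin n → ℂ) : hermF A x (c • y) = c * hermF A x y := by
  simp only [hermF, Pi.smul_apply, smul_eq_mul, Finset.mul_sum]
  exact Finset.sum_congr rfl fun _ _ => Finset.sum_congr rfl fun _ _ => by ring

lemma conj_hermF (hA : A.IsHermitian) (x y : Fin n → ℂ) : conj (hermF A x y) = hermF A y x := by
  simp only [hermF, map_sum, map_mul, conj_conj]
  rw [Finset.sum_comm]
  refine Finset.sum_congr rfl fun i _ => Finset.sum_congr rfl fun j _ => ?_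
  rw [← hA.apply i j, Complex.star_def]
  ring

lemma im_hermF_self (hA : A.IsHermitian) (x : Fin n → ℂ) : (hermF A x x).im = 0 :=
  conj_eq_iff_im.mp (conj_hermF hA x x)

lemma hermF_sub_smul_self_eq_zero (hA : A.IsHermitian) {x e : Fin n → ℂ} {θ : ℂ} (c : ℝ)
    (he : hermF A e e = 0) (hxe : hermF A x e = θ) (hxx : hermF A x x = c * (θ + conj θ)) :
    hermF A (x - (c : ℂ) • e) (x - (c : ℂ) • e) = 0 := by
  simp only [hermF_sub_left, hermF_sub_right, hermF_smul_left, hermF_smul_right, conj_ofReal]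
  rw [← conj_hermF hA x e, hxe, hxx, he]
  ring

end HermitianForm

def coordLattice (R : Subring ℂ) (n : ℕ) : Set (Fin n → ℂ) := {x | ∀ i, x i ∈ R}

def hermDual {n : ℕ} (R : Subring ℂ) (A : Matrix (Fin n) (Fin n) ℂ) : Set (Fin n → ℂ) :=
  {x | ∀ v ∈ coordLattice R n, hermF A x v ∈ R}

section Duality

variable {n : ℕ} {R : Subring ℂ} {A : Matrix (Fin n) (Fin n) ℂ} {θ : ℂ}

lemma add_mem_hermDual {x y : Fin n → ℂ} (hx : x ∈ hermDual R A) (hy : y ∈ hermDual R A) :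
    x + y ∈ hermDual R A := fun v hv => by
  rw [hermF_add_left]; exact add_mem (hx v hv) (hy v hv)

lemma smul_mem_hermDual {c : ℂ} (hc : conj c ∈ R) {x : Fin n → ℂ} (hx : x ∈ hermDual R A) :
    c • x ∈ hermDual R A := fun v hv => by
  rw [hermF_smul_left]; exact mul_mem hc (hx v hv)

lemma smul_mem_coordLattice (hmod : θ • hermDual R A = coordLattice R n) {x : Fin n → ℂ}
    (hx : x ∈ hermDual R A) : θ • x ∈ coordLattice R n :=
  hmod ▸ Set.smul_mem_smul_set hx

lemma exists_mem_hermDual_smul_eq (hmod : θ • hermDual R A = coordLattice R n)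
    {v : Fin n → ℂ} (hv : v ∈ coordLattice R n) : ∃ y ∈ hermDual R A, θ • y = v :=
  Set.mem_smul_set.mp (hmod ▸ hv)

lemma conj_smul_mem_coordLattice (hθ0 : θ ≠ 0) (hθ : θ / conj θ ∈ R)
    (hmod : θ • hermDual R A = coordLattice R n) {y : Fin n → ℂ} (hy : y ∈ hermDual R A) :
    conj θ • y ∈ coordLattice R n := by
  rw [show conj θ • y = θ • ((conj θ / θ) • y) by rw [smul_smul, mul_div_cancel₀ _ hθ0]]
  exact smul_mem_coordLattice hmod (smul_mem_hermDual (by rwa [map_div₀, conj_conj]) hy)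

lemma mem_coordLattice_of_forall_hermF_mem (hA : A.IsHermitian)
    (hconj : ∀ z ∈ R, conj z ∈ R) (hθ0 : θ ≠ 0) (hθ : θ / conj θ ∈ R)
    (hmod : θ • hermDual R A = coordLattice R n) {x : Fin n → ℂ}
    (hx : ∀ y ∈ hermDual R A, hermF A y x ∈ R) : x ∈ coordLattice R n := by
  have hdual : θ⁻¹ • x ∈ hermDual R A := fun v hv => by
    obtain ⟨y, hy, rfl⟩ := exists_mem_hermDual_smul_eq hmod hv
    rw [hermF_smul_left, hermF_smul_right, ← conj_hermF hA, ← mul_assoc, map_inv₀,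
      ← div_eq_inv_mul]
    exact mul_mem hθ (hconj _ (hx y hy))
  simpa [smul_smul, hθ0] using smul_mem_coordLattice hmod hdual

lemma exists_mem_hermDual_hermF_ne_zero (hA : A.IsHermitian) (hR : R ≠ ⊤)
    (hconj : ∀ z ∈ R, conj z ∈ R) (hθ0 : θ ≠ 0) (hθ : θ / conj θ ∈ R)
    (hmod : θ • hermDual R A = coordLattice R n) {e : Fin n → ℂ} (he : e ≠ 0) :
    ∃ x ∈ hermDual R A, hermF A x e ≠ 0 := by
  by_contra! h0
  obtain ⟨i, hi⟩ := Function.ne_iff.mp he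
  obtain ⟨z, -, hz⟩ := SetLike.exists_of_lt hR.lt_top
  have hze : (z / e i) • e ∈ coordLattice R n :=
    mem_coordLattice_of_forall_hermF_mem hA hconj hθ0 hθ hmod fun y hy => by
      simp [hermF_smul_right, h0 y hy]
  exact hz (by simpa [div_mul_cancel₀ z hi] using hze i)

end Duality

section Partner

variable {n : ℕ} {A : Matrix (Fin n) (Fin n) ℂ} {ζ : ℂ} {d : ℤ}

lemma exists_mem_hermDual_hermF_eq_one (h : IsQuadCyclotomicRoot ζ d) (hA : A.IsHermitian)
    (hmod : (1 + ζ) • hermDual (Subring.closure {ζ}) A = coordLattice (Subring.closure {ζ}) n)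
    {e : Fin n → ℂ} (he_mem : e ∈ coordLattice (Subring.closure {ζ}) n) (he : e ≠ 0)
    (hprim : ∀ α ∈ Subring.closure {ζ}, ∀ w ∈ coordLattice (Subring.closure {ζ}) n,
      e = α • w → ∃ β ∈ Subring.closure {ζ}, α * β = 1) :
    ∃ y ∈ hermDual (Subring.closure {ζ}) A, hermF A y e = 1 := by
  set R := Subring.closure {ζ}
  have hθ := h.one_add_div_conj_mem_closure
  have hconj : ∀ z ∈ R, conj z ∈ R := fun _ => h.conj_mem_closure
  set J := (fun x => hermF A x e) '' hermDual R A
  have hJ : J ⊆ R := by rintro _ ⟨x, hx, rfl⟩; exact hx e he_mem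
  have hadd : ∀ a ∈ J, ∀ b ∈ J, a + b ∈ J := by
    rintro _ ⟨x, hx, rfl⟩ _ ⟨y, hy, rfl⟩
    exact ⟨x + y, add_mem_hermDual hx hy, hermF_add_left x y e⟩
  have hmul : ∀ α ∈ R, ∀ a ∈ J, α * a ∈ J := by
    rintro α hα _ ⟨x, hx, rfl⟩
    exact ⟨conj α • x, smul_mem_hermDual (by rwa [conj_conj]) hx, by simp [hermF_smul_left]⟩
  have hne : ∃ a ∈ J, a ≠ 0 := by
    obtain ⟨x, hx, hxe⟩ := exists_mem_hermDual_hermF_ne_zero hA h.closure_ne_top hconj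
      h.one_add_ne_zero hθ hmod he
    exact ⟨_, ⟨x, hx, rfl⟩, hxe⟩
  obtain ⟨_, ⟨x₀, hx₀, rfl⟩, hδ0, hδ⟩ := h.exists_generator hJ hadd hmul hne
  beta_reduce at hδ0 hδ
  have hw : (hermF A x₀ e)⁻¹ • e ∈ coordLattice R n :=
    mem_coordLattice_of_forall_hermF_mem hA hconj h.one_add_ne_zero hθ hmod fun y hy => by
      obtain ⟨ρ, hρ, hρe : hermF A y e = ρ * hermF A x₀ e⟩ := hδ _ ⟨y, hy, rfl⟩
      rwa [hermF_smul_right, hρe, mul_comm ρ, inv_mul_cancel_left₀ hδ0]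
  obtain ⟨β, hβ, hβδ⟩ := hprim _ (hJ ⟨x₀, hx₀, rfl⟩) _ hw
    (by rw [smul_smul, mul_inv_cancel₀ hδ0, one_smul])
  exact ⟨conj β • x₀, smul_mem_hermDual (by rwa [conj_conj]) hx₀,
    by rw [hermF_smul_left, conj_conj, mul_comm, hβδ]⟩

lemma exists_isotropic_hermF_eq_one_add (h : IsQuadCyclotomicRoot ζ d) (hA : A.IsHermitian)
    (hmod : (1 + ζ) • hermDual (Subring.closure {ζ}) A = coordLattice (Subring.closure {ζ}) n)
    {e : Fin n → ℂ} (he_mem : e ∈ coordLattice (Subring.closure {ζ}) n) (he : e ≠ 0)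
    (hiso : hermF A e e = 0)
    (hprim : ∀ α ∈ Subring.closure {ζ}, ∀ w ∈ coordLattice (Subring.closure {ζ}) n,
      e = α • w → ∃ β ∈ Subring.closure {ζ}, α * β = 1) :
    ∃ f ∈ coordLattice (Subring.closure {ζ}) n, hermF A f f = 0 ∧ hermF A f e = 1 + ζ := by
  obtain ⟨y, hy, hye⟩ := exists_mem_hermDual_hermF_eq_one h hA hmod he_mem he hprim
  set f₀ := conj (1 + ζ) • y
  have hf₀ : f₀ ∈ coordLattice _ n :=
    conj_smul_mem_coordLattice h.one_add_ne_zero h.one_add_div_conj_mem_closure hmod hy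
  have hf₀e : hermF A f₀ e = 1 + ζ := by rw [hermF_smul_left, conj_conj, hye, mul_one]
  have hf₀f₀ : hermF A f₀ f₀ = (1 + ζ) * hermF A y f₀ := by rw [hermF_smul_left, conj_conj]
  obtain ⟨m, hm⟩ :=
    h.exists_int_of_im_one_add_mul_eq_zero (hy f₀ hf₀) (hf₀f₀ ▸ im_hermF_self hA f₀)
  refine ⟨f₀ - ((m : ℝ) : ℂ) • e, fun i => ?_, hermF_sub_smul_self_eq_zero hA m hiso hf₀e ?_, ?_⟩
  · exact sub_mem (hf₀ i) (mul_mem (by simp [intCast_mem]) (he_mem i))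
  · rw [hf₀f₀, hm, map_add, map_one, add_add_add_comm, h.add_conj_self]
    push_cast; ring
  · rw [hermF_sub_left, hf₀e, hermF_smul_left, hiso, mul_zero, sub_zero]

end Partner

theorem exists_hyperbolic_partner_general
    (k : ℕ) (hk : k ∈ ({3, 4, 6} : Set ℕ)) (s : ℕ)
    (H : Matrix (Fin (s + 1)) (Fin (s + 1)) ℂ)
    (hherm : H.IsHermitian)
    (hmod : (1 + zetaC k) •
        {x : Fin (s + 1) → ℂ | ∀ v : Fin (s + 1) → ℂ, (∀ i, v i ∈ Rk k) → hermF H x v ∈ Rk k} =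
        {x : Fin (s + 1) → ℂ | ∀ i, x i ∈ Rk k})
    (e : Fin (s + 1) → Rk k) (he : e ≠ 0)
    (hiso : hermF H (cv e) (cv e) = 0)
    (hprim : ∀ (α : ℂ) (w : Fin (s + 1) → Rk k), α ∈ Rk k → cv e = α • cv w →
      ∃ β ∈ Rk k, α * β = 1) :
    ∃ f : Fin (s + 1) → Rk k,
      hermF H (cv f) (cv f) = 0 ∧ hermF H (cv f) (cv e) = 1 + zetaC k := by
  obtain ⟨d, hζ⟩ := exists_isQuadCyclotomicRoot_zetaC hk
  have hcve : cv e ≠ 0 := fun h0 => he (funext fun i => Subtype.ext (congrFun h0 i))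
  obtain ⟨f, hf, hff, hfe⟩ := exists_isotropic_hermF_eq_one_add hζ hherm hmod (fun i => (e i).2)
    hcve hiso fun α hα w hw hew => hprim α (fun i => ⟨w i, hw i⟩) hα hew
  exact ⟨fun i => ⟨f i, hf i⟩, hff, hfe⟩

/-- In a `(1+ζ_k)`-modular Hermitian lattice `Λ = ℤ[ζ_k]^{s+1}` of signature `(1,s)`, every
nonzero primitive isotropic vector `e` can be completed to a hyperbolic pair: there exists
an isotropic `f ∈ Λ` with `f ⋆ e = 1 + ζ_k`. -/
theorem exists_hyperbolic_partner
    (k : ℕ) (hk : k ∈ ({3, 4, 6} : Set ℕ)) (s : ℕ) (hs : 1 < s)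
    (H : Matrix (Fin (s + 1)) (Fin (s + 1)) ℂ)
    (hentries : ∀ i j, H i j ∈ Rk k)
    (hherm : H.IsHermitian)
    (hpos : Fintype.card {i // 0 < hherm.eigenvalues i} = 1)
    (hneg : Fintype.card {i // hherm.eigenvalues i < 0} = s)
    (hmod : (1 + zetaC k) •
        {x : Fin (s + 1) → ℂ | ∀ v : Fin (s + 1) → ℂ, (∀ i, v i ∈ Rk k) → hermF H x v ∈ Rk k} =
        {x : Fin (s + 1) → ℂ | ∀ i, x i ∈ Rk k})
    (e : Fin (s + 1) → Rk k) (he : e ≠ 0)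
    (hiso : hermF H (cv e) (cv e) = 0)
    (hprim : ∀ (α : ℂ) (w : Fin (s + 1) → Rk k), α ∈ Rk k → cv e = α • cv w →
      ∃ β ∈ Rk k, α * β = 1) :
    ∃ f : Fin (s + 1) → Rk k,
      hermF H (cv f) (cv f) = 0 ∧ hermF H (cv f) (cv e) = 1 + zetaC k :=
  exists_hyperbolic_partner_general k hk s H hherm hmod e he hiso hprim

end
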